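/- arXiv:2212.07403 — 4 statements merged into one kernel-verified Lean document; each statement's English description precedes it below -/
import Mathlib

section
/- q-derivative identity for the kernel (identity (2.8) of the paper): for every t ∈ (0,T] and λ > 0, D_q[Γ_{υ,λ}](t) = λ υ(t) Γ_{υ,λ}(qt), where D_q f(t) = (f(t)−f(qt))/((1−q)t). -/
open scoped BigOperators InnerProductSpace

noncomputable def qDeriv (q : ℝ) (f : ℝ → ℝ) (t : ℝ) : ℝ :=
  (f t - f (q * t)) / ((1 - q) * t)

noncomputable def qDerivC (q : ℝ) (f : ℝ → ℂ) (t : ℝ) : ℂ :=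
  (f t - f (q * t)) / (((1 - q) * t : ℝ) : ℂ)

noncomputable def jacksonIntegral (q x : ℝ) (f : ℝ → ℝ) : ℝ :=
  (1 - q) * x * ∑' m : ℕ, q ^ m * f (q ^ m * x)

noncomputable def jacksonIntegralC (q x : ℝ) (f : ℝ → ℂ) : ℂ :=
  (((1 - q) * x : ℝ) : ℂ) * ∑' m : ℕ, (q : ℂ) ^ m * f (q ^ m * x)

noncomputable def qGamma (q lam : ℝ) (v : ℝ → ℝ) (t : ℝ) : ℝ :=
  ∏' i : ℕ, (1 + (1 - q) * lam * q ^ i * t * v (q ^ i * t))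

noncomputable def qFact (q : ℝ) (k : ℕ) : ℝ :=
  ∏ j ∈ Finset.range k, ((1 - q ^ (j + 1)) / (1 - q))

noncomputable def qExp (q x : ℝ) : ℝ :=
  ∑' k : ℕ, q ^ (k * (k - 1) / 2) * x ^ k / qFact q k

noncomputable def qDerivH (q : ℝ) {H : Type*} [NormedAddCommGroup H] [NormedSpace ℂ H]
    (u : ℝ → H) (t : ℝ) : H :=
  (((1 - q) * t)⁻¹ : ℝ) • (u t - u (q * t))

noncomputable def sobNormSq {H : Type*} [NormedAddCommGroup H] [InnerProductSpace ℂ H]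
    {I : Type*} (e : HilbertBasis I ℂ H) (lam : I → ℝ) (d : ℝ) (u : H) : ℝ :=
  ∑' k, lam k ^ d * ‖⟪e k, u⟫_ℂ‖ ^ 2

def sobMem {H : Type*} [NormedAddCommGroup H] [InnerProductSpace ℂ H]
    {I : Type*} (e : HilbertBasis I ℂ H) (lam : I → ℝ) (d : ℝ) (u : H) : Prop :=
  Summable (fun k => lam k ^ d * ‖⟪e k, u⟫_ℂ‖ ^ 2)

/-!
Splitting off the factor `i = 0` of the product defining `Γ_{υ,λ}(t)` leaves exactly the product
defining `Γ_{υ,λ}(qt)`, so `Γ_{υ,λ}(t) = (1 + (1 - q) λ t υ(t)) Γ_{υ,λ}(qt)`, and the difference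
quotient collapses to `λ υ(t) Γ_{υ,λ}(qt)`. Splitting off a factor needs the product at `qt` to
converge, which holds because its factors are `1 + O(qⁱ)` as soon as `υ` is bounded on `[0, T]`.
-/

lemma pow_mul_mem_Icc {q s T : ℝ} (hq0 : 0 ≤ q) (hq1 : q ≤ 1) (hs : s ∈ Set.Icc 0 T) (i : ℕ) :
    q ^ i * s ∈ Set.Icc 0 T :=
  ⟨mul_nonneg (pow_nonneg hq0 i) hs.1,
    (mul_le_of_le_one_left hs.1 (pow_le_one₀ hq0 hq1)).trans hs.2⟩

section qGamma

variable {q lam : ℝ} {v : ℝ → ℝ} {t : ℝ}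

lemma multipliable_qGamma_factors {C : ℝ} (hq0 : 0 ≤ q) (hq1 : q < 1)
    (hv : ∀ i : ℕ, |v (q ^ i * t)| ≤ C) :
    Multipliable fun i : ℕ => 1 + (1 - q) * lam * q ^ i * t * v (q ^ i * t) := by
  refine Real.multipliable_one_add_of_summable <|
    ((summable_geometric_of_lt_one hq0 hq1).mul_left (|(1 - q) * lam * t| * C)).of_norm_bounded
      fun i => ?_
  calc ‖(1 - q) * lam * q ^ i * t * v (q ^ i * t)‖
      = |(1 - q) * lam * t| * |v (q ^ i * t)| * q ^ i := by
        simp only [Real.norm_eq_abs, abs_mul, abs_of_nonneg (pow_nonneg hq0 i)]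
        ring
    _ ≤ |(1 - q) * lam * t| * C * q ^ i := by gcongr; exact hv i

lemma qGamma_eq_mul_qGamma_mul
    (h : Multipliable fun i : ℕ => 1 + (1 - q) * lam * q ^ i * (q * t) * v (q ^ i * (q * t))) :
    qGamma q lam v t = (1 + (1 - q) * lam * t * v t) * qGamma q lam v (q * t) := by
  have shift : ∀ i : ℕ, q ^ (i + 1) * t = q ^ i * (q * t) := fun i => by ring
  have factor_succ : (fun i : ℕ => 1 + (1 - q) * lam * q ^ (i + 1) * t * v (q ^ (i + 1) * t)) =
      fun i => 1 + (1 - q) * lam * q ^ i * (q * t) * v (q ^ i * (q * t)) := by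
    funext i
    rw [shift]
    ring
  unfold qGamma
  rw [tprod_eq_zero_mul' (factor_succ ▸ h), factor_succ]
  simp

lemma qDeriv_qGamma (hq1 : q ≠ 1) (ht : t ≠ 0)
    (h : Multipliable fun i : ℕ => 1 + (1 - q) * lam * q ^ i * (q * t) * v (q ^ i * (q * t))) :
    qDeriv q (qGamma q lam v) t = lam * v t * qGamma q lam v (q * t) := by
  have hne : (1 - q) * t ≠ 0 := mul_ne_zero (sub_ne_zero.mpr hq1.symm) ht
  rw [qDeriv, qGamma_eq_mul_qGamma_mul h, div_eq_iff hne]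
  ring

end qGamma

theorem kernel_qDeriv_general
    (q T lam : ℝ) (v : ℝ → ℝ)
    (hq0 : 0 < q) (hq1 : q < 1)
    (hvcont : ContinuousOn v (Set.Icc 0 T)) :
    ∀ t ∈ Set.Ioc (0 : ℝ) T,
      qDeriv q (qGamma q lam v) t = lam * v t * qGamma q lam v (q * t) := by
  intro t ht
  obtain ⟨C, hC⟩ := isCompact_Icc.exists_bound_of_continuousOn hvcont
  have hqt : q * t ∈ Set.Icc 0 T :=
    pow_one q ▸ pow_mul_mem_Icc hq0.le hq1.le (Set.Ioc_subset_Icc_self ht) 1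
  exact qDeriv_qGamma hq1.ne ht.1.ne' <| multipliable_qGamma_factors hq0.le hq1
    fun i => hC _ (pow_mul_mem_Icc hq0.le hq1.le hqt i)

/-- q-derivative identity for the kernel (identity (2.8) of the paper): for every `t ∈ (0,T]`
and `λ > 0`, `D_q[Γ_{υ,λ}](t) = λ υ(t) Γ_{υ,λ}(qt)`, where
`D_q f(t) = (f(t)−f(qt))/((1−q)t)`. -/
theorem kernel_qDeriv
    (q T α β lam : ℝ) (v : ℝ → ℝ)
    (hq0 : 0 < q) (hq1 : q < 1)
    (hvcont : ContinuousOn v (Set.Icc 0 T))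
    (hα : 0 < α)
    (hv : ∀ t ∈ Set.Icc (0 : ℝ) T, α ≤ v t ∧ v t ≤ β)
    (hlam : 0 < lam) :
    ∀ t ∈ Set.Ioc (0 : ℝ) T,
      qDeriv q (qGamma q lam v) t = lam * v t * qGamma q lam v (q * t) :=
  kernel_qDeriv_general q T lam v hq0 hq1 hvcont
end

section
/- Solution of the scalar q-Cauchy problem: let λ > 0, c ∈ ℂ and let f:[0,T]→ℂ be bounded. Then the function u(t) = γ_{υ,λ}(t)·[c + ∫_0^t Γ_{υ,λ}(qs) f(s) d_q s] satisfies D_q u(t) + λ υ(t) u(t) = f(t) for all t ∈ (0,T] together with u(0) = c; moreover u is the unique function continuous at 0 with these properties. -/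
open scoped BigOperators InnerProductSpace

/-- The candidate solution `u(t) = γ_{υ,λ}(t)·[c + ∫_0^t Γ_{υ,λ}(qs) f(s) d_q s]` of the
scalar q-Cauchy problem. -/
noncomputable def qHeatSol (q lam : ℝ) (v : ℝ → ℝ) (c : ℂ) (f : ℝ → ℂ) (t : ℝ) : ℂ :=
  (((qGamma q lam v t)⁻¹ : ℝ) : ℂ) *
    (c + jacksonIntegralC q t (fun s => ((qGamma q lam v (q * s) : ℝ) : ℂ) * f s))

/-!
On the orbit `qⁱt` the factors `1 + (1-q)λ qⁱt υ(qⁱt)` of `Γ_{υ,λ}(t)` are at least `1` and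
dominated by a geometric series, so `1 ≤ Γ(t) ≤ exp(λβt)` and `Γ(t) = (1 + (1-q)λtυ(t)) Γ(qt)`.
The q-equation at `t` is the recurrence `u(qt) = (1 + (1-q)λtυ(t)) u(t) - (1-q)t f(t)`; for
`u = γ (c + J)` it reduces to the telescoping identity `J(t) = J(qt) + (1-q)t Γ(qt) f(t)` of the
Jackson integral. Continuity at `0` follows from `Γ(t) → 1` and `‖J(t)‖ ≤ Ct`. The difference `d`
of two solutions satisfies `d(qt) = (1 + (1-q)λtυ(t)) d(t)`, so `‖d(t)‖ ≤ ‖d(qⁿt)‖ → ‖d(0)‖ = 0`.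
-/

open Set Filter Topology

lemma pow_mul_mem_Icc_s7 {q t T : ℝ} (hq0 : 0 ≤ q) (hq1 : q ≤ 1) (ht : t ∈ Icc 0 T) (n : ℕ) :
    q ^ n * t ∈ Icc 0 T :=
  ⟨mul_nonneg (pow_nonneg hq0 n) ht.1,
    (mul_le_of_le_one_left ht.1 (pow_le_one₀ hq0 hq1)).trans ht.2⟩

namespace Real

variable {ι : Type*} {a : ι → ℝ}

lemma tprod_one_add_eq_exp_tsum_log (ha : ∀ i, 0 ≤ a i) (hs : Summable a) :
    ∏' i, (1 + a i) = exp (∑' i, log (1 + a i)) :=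
  (rexp_tsum_eq_tprod (fun i => by linarith [ha i]) (summable_log_one_add_of_summable hs)).symm

lemma one_le_tprod_one_add (ha : ∀ i, 0 ≤ a i) (hs : Summable a) : 1 ≤ ∏' i, (1 + a i) := by
  rw [tprod_one_add_eq_exp_tsum_log ha hs]
  exact one_le_exp (tsum_nonneg fun i => log_nonneg (by linarith [ha i]))

lemma tprod_one_add_le_exp_tsum (ha : ∀ i, 0 ≤ a i) (hs : Summable a) :
    ∏' i, (1 + a i) ≤ exp (∑' i, a i) := by
  rw [tprod_one_add_eq_exp_tsum_log ha hs]
  refine exp_le_exp.2 (Summable.tsum_le_tsum (fun i => ?_) (summable_log_one_add_of_summable hs) hs)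
  linarith [log_le_sub_one_of_pos (show 0 < 1 + a i by linarith [ha i])]

end Real

section qGamma

variable {q lam β T t : ℝ} {v : ℝ → ℝ}

def qGammaTerm (q lam : ℝ) (v : ℝ → ℝ) (t : ℝ) (i : ℕ) : ℝ :=
  (1 - q) * lam * (q ^ i * t) * v (q ^ i * t)

lemma qGamma_eq_tprod (q lam : ℝ) (v : ℝ → ℝ) (t : ℝ) :
    qGamma q lam v t = ∏' i, (1 + qGammaTerm q lam v t i) :=
  tprod_congr fun i => by rw [qGammaTerm]; ring

lemma qGamma_zero (q lam : ℝ) (v : ℝ → ℝ) : qGamma q lam v 0 = 1 := by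
  simp [qGamma]

lemma qGammaTerm_nonneg (hq0 : 0 < q) (hq1 : q < 1) (hlam : 0 ≤ lam)
    (hv : ∀ s ∈ Icc 0 T, 0 ≤ v s ∧ v s ≤ β) (ht : t ∈ Icc 0 T) (i : ℕ) :
    0 ≤ qGammaTerm q lam v t i := by
  have hs := pow_mul_mem_Icc_s7 hq0.le hq1.le ht i
  exact mul_nonneg (mul_nonneg (mul_nonneg (sub_nonneg.2 hq1.le) hlam) hs.1) (hv _ hs).1

lemma qGammaTerm_le (hq0 : 0 < q) (hq1 : q < 1) (hlam : 0 ≤ lam)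
    (hv : ∀ s ∈ Icc 0 T, 0 ≤ v s ∧ v s ≤ β) (ht : t ∈ Icc 0 T) (i : ℕ) :
    qGammaTerm q lam v t i ≤ (1 - q) * lam * β * t * q ^ i := by
  have hs := pow_mul_mem_Icc_s7 hq0.le hq1.le ht i
  calc qGammaTerm q lam v t i ≤ (1 - q) * lam * (q ^ i * t) * β :=
        mul_le_mul_of_nonneg_left (hv _ hs).2
          (mul_nonneg (mul_nonneg (sub_nonneg.2 hq1.le) hlam) hs.1)
    _ = (1 - q) * lam * β * t * q ^ i := by ring

lemma summable_qGammaTerm (hq0 : 0 < q) (hq1 : q < 1) (hlam : 0 ≤ lam)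
    (hv : ∀ s ∈ Icc 0 T, 0 ≤ v s ∧ v s ≤ β) (ht : t ∈ Icc 0 T) :
    Summable (qGammaTerm q lam v t) :=
  Summable.of_nonneg_of_le (qGammaTerm_nonneg hq0 hq1 hlam hv ht)
    (qGammaTerm_le hq0 hq1 hlam hv ht)
    ((summable_geometric_of_lt_one hq0.le hq1).mul_left _)

lemma tsum_qGammaTerm_le (hq0 : 0 < q) (hq1 : q < 1) (hlam : 0 ≤ lam)
    (hv : ∀ s ∈ Icc 0 T, 0 ≤ v s ∧ v s ≤ β) (ht : t ∈ Icc 0 T) :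
    ∑' i, qGammaTerm q lam v t i ≤ lam * β * t := by
  have hle := Summable.tsum_le_tsum (qGammaTerm_le hq0 hq1 hlam hv ht)
    (summable_qGammaTerm hq0 hq1 hlam hv ht)
    ((summable_geometric_of_lt_one hq0.le hq1).mul_left ((1 - q) * lam * β * t))
  rw [tsum_mul_left, tsum_geometric_of_lt_one hq0.le hq1] at hle
  have hq : 1 - q ≠ 0 := (sub_pos.2 hq1).ne'
  calc _ ≤ _ := hle
    _ = lam * β * t := by field_simp

lemma one_le_qGamma (hq0 : 0 < q) (hq1 : q < 1) (hlam : 0 ≤ lam)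
    (hv : ∀ s ∈ Icc 0 T, 0 ≤ v s ∧ v s ≤ β) (ht : t ∈ Icc 0 T) :
    1 ≤ qGamma q lam v t := by
  rw [qGamma_eq_tprod]
  exact Real.one_le_tprod_one_add (qGammaTerm_nonneg hq0 hq1 hlam hv ht)
    (summable_qGammaTerm hq0 hq1 hlam hv ht)

lemma qGamma_le_exp (hq0 : 0 < q) (hq1 : q < 1) (hlam : 0 ≤ lam)
    (hv : ∀ s ∈ Icc 0 T, 0 ≤ v s ∧ v s ≤ β) (ht : t ∈ Icc 0 T) :
    qGamma q lam v t ≤ Real.exp (lam * β * t) := by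
  rw [qGamma_eq_tprod]
  exact (Real.tprod_one_add_le_exp_tsum
    (qGammaTerm_nonneg hq0 hq1 hlam hv ht)
    (summable_qGammaTerm hq0 hq1 hlam hv ht)).trans
    (Real.exp_le_exp.2 (tsum_qGammaTerm_le hq0 hq1 hlam hv ht))

lemma qGamma_eq_mul_qGamma_q_mul (hq0 : 0 < q) (hq1 : q < 1) (hlam : 0 ≤ lam)
    (hv : ∀ s ∈ Icc 0 T, 0 ≤ v s ∧ v s ≤ β) (ht : t ∈ Icc 0 T) :
    qGamma q lam v t = (1 + (1 - q) * t * (lam * v t)) * qGamma q lam v (q * t) := by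
  have hshift : (fun i => 1 + qGammaTerm q lam v t (i + 1))
      = fun i => 1 + qGammaTerm q lam v (q * t) i := by
    ext i; simp only [qGammaTerm, pow_succ, mul_assoc]
  have hqt := pow_mul_mem_Icc_s7 hq0.le hq1.le ht 1
  rw [pow_one] at hqt
  rw [qGamma_eq_tprod, qGamma_eq_tprod, tprod_eq_zero_mul', hshift]
  · simp only [qGammaTerm, pow_zero, one_mul]; ring
  · rw [hshift]
    exact Real.multipliable_one_add_of_summable (summable_qGammaTerm hq0 hq1 hlam hv hqt)

lemma tendsto_qGamma_nhdsWithin_zero (hq0 : 0 < q) (hq1 : q < 1) (hlam : 0 ≤ lam)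
    (hv : ∀ s ∈ Icc 0 T, 0 ≤ v s ∧ v s ≤ β) :
    Tendsto (qGamma q lam v) (𝓝[Icc 0 T] 0) (𝓝 1) := by
  have hexp : Tendsto (fun t => Real.exp (lam * β * t)) (𝓝[Icc 0 T] 0) (𝓝 1) := by
    simpa using ((continuous_const.mul continuous_id).rexp.tendsto 0).mono_left
      (nhdsWithin_le_nhds (s := Icc 0 T))
  refine tendsto_of_tendsto_of_tendsto_of_le_of_le' tendsto_const_nhds hexp ?_ ?_
  · filter_upwards [self_mem_nhdsWithin] with t ht using one_le_qGamma hq0 hq1 hlam hv ht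
  · filter_upwards [self_mem_nhdsWithin] with t ht using qGamma_le_exp hq0 hq1 hlam hv ht

end qGamma

section Jackson

variable {q t K : ℝ} {g : ℝ → ℂ}

lemma norm_jackson_term_le (hq0 : 0 < q) (hq1 : q < 1) (ht : 0 ≤ t)
    (hg : ∀ s ∈ Icc 0 t, ‖g s‖ ≤ K) (m : ℕ) :
    ‖(q : ℂ) ^ m * g (q ^ m * t)‖ ≤ q ^ m * K := by
  rw [norm_mul, norm_pow, Complex.norm_of_nonneg hq0.le]
  exact mul_le_mul_of_nonneg_left (hg _ (pow_mul_mem_Icc_s7 hq0.le hq1.le ⟨ht, le_rfl⟩ m))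
    (pow_nonneg hq0.le m)

lemma summable_jackson_term (hq0 : 0 < q) (hq1 : q < 1) (ht : 0 ≤ t)
    (hg : ∀ s ∈ Icc 0 t, ‖g s‖ ≤ K) :
    Summable fun m : ℕ => (q : ℂ) ^ m * g (q ^ m * t) :=
  Summable.of_norm_bounded ((summable_geometric_of_lt_one hq0.le hq1).mul_right K)
    (norm_jackson_term_le hq0 hq1 ht hg)

lemma norm_jacksonIntegralC_le (hq0 : 0 < q) (hq1 : q < 1) (ht : 0 ≤ t)
    (hg : ∀ s ∈ Icc 0 t, ‖g s‖ ≤ K) :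
    ‖jacksonIntegralC q t g‖ ≤ t * K := by
  have hsum : ‖∑' m : ℕ, (q : ℂ) ^ m * g (q ^ m * t)‖ ≤ (1 - q)⁻¹ * K :=
    tsum_of_norm_bounded ((hasSum_geometric_of_lt_one hq0.le hq1).mul_right K)
      (norm_jackson_term_le hq0 hq1 ht hg)
  have hq : 0 < 1 - q := sub_pos.2 hq1
  rw [jacksonIntegralC, norm_mul, Complex.norm_of_nonneg (mul_nonneg hq.le ht)]
  calc (1 - q) * t * ‖∑' m : ℕ, (q : ℂ) ^ m * g (q ^ m * t)‖
      ≤ (1 - q) * t * ((1 - q)⁻¹ * K) := mul_le_mul_of_nonneg_left hsum (mul_nonneg hq.le ht)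
    _ = t * K := by field_simp

lemma jacksonIntegralC_eq_add (hs : Summable fun m : ℕ => (q : ℂ) ^ m * g (q ^ m * t)) :
    jacksonIntegralC q t g = jacksonIntegralC q (q * t) g + (((1 - q) * t : ℝ) : ℂ) * g t := by
  have hshift : ∑' m : ℕ, (q : ℂ) ^ (m + 1) * g (q ^ (m + 1) * t)
      = q * ∑' m : ℕ, (q : ℂ) ^ m * g (q ^ m * (q * t)) := by
    rw [← tsum_mul_left]
    exact tsum_congr fun m => by rw [show q ^ (m + 1) * t = q ^ m * (q * t) by ring]; ring
  rw [jacksonIntegralC, jacksonIntegralC, hs.tsum_eq_zero_add, hshift]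
  simp only [pow_zero, one_mul]
  push_cast
  ring

end Jackson

lemma qDerivC_add_mul_eq_iff {q t a : ℝ} {w : ℝ → ℂ} {y : ℂ} (hq : q ≠ 1) (ht : t ≠ 0) :
    qDerivC q w t + (a : ℂ) * w t = y ↔
      w (q * t) = ((1 + (1 - q) * t * a : ℝ) : ℂ) * w t - (((1 - q) * t : ℝ) : ℂ) * y := by
  have hd : (((1 - q) * t : ℝ) : ℂ) ≠ 0 :=
    Complex.ofReal_ne_zero.2 (mul_ne_zero (sub_ne_zero.2 hq.symm) ht)
  rw [qDerivC, div_add' _ _ _ hd, div_eq_iff hd]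
  push_cast
  constructor <;> intro h <;> linear_combination -h

lemma norm_sub_le_norm_sub_of_qDerivC_add_mul_eq {q s a : ℝ} {w₁ w₂ : ℝ → ℂ} {y : ℂ}
    (hq1 : q < 1) (hs : 0 < s) (ha : 0 ≤ a)
    (h₁ : qDerivC q w₁ s + (a : ℂ) * w₁ s = y) (h₂ : qDerivC q w₂ s + (a : ℂ) * w₂ s = y) :
    ‖w₁ s - w₂ s‖ ≤ ‖w₁ (q * s) - w₂ (q * s)‖ := by
  rw [qDerivC_add_mul_eq_iff hq1.ne hs.ne'] at h₁ h₂
  have hA : 1 ≤ 1 + (1 - q) * s * a := by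
    have : 0 ≤ (1 - q) * s * a := mul_nonneg (mul_nonneg (sub_nonneg.2 hq1.le) hs.le) ha
    linarith
  have hdiff : w₁ (q * s) - w₂ (q * s) = ((1 + (1 - q) * s * a : ℝ) : ℂ) * (w₁ s - w₂ s) := by
    rw [h₁, h₂]; ring
  rw [hdiff, norm_mul, Complex.norm_of_nonneg (by linarith)]
  exact le_mul_of_one_le_left (norm_nonneg _) hA

lemma eq_zero_of_tendsto_of_norm_le_norm_mul {E : Type*} [NormedAddCommGroup E] {q T : ℝ}
    {d : ℝ → E} (hq0 : 0 < q) (hq1 : q < 1) (hd : Tendsto d (𝓝[Icc 0 T] 0) (𝓝 0))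
    (hgrow : ∀ s ∈ Ioc 0 T, ‖d s‖ ≤ ‖d (q * s)‖) :
    ∀ t ∈ Ioc 0 T, d t = 0 := by
  intro t ht
  have horbit : ∀ n : ℕ, q ^ n * t ∈ Ioc 0 T := fun n =>
    ⟨mul_pos (pow_pos hq0 n) ht.1, (pow_mul_mem_Icc_s7 hq0.le hq1.le (Ioc_subset_Icc_self ht) n).2⟩
  have hmono : ∀ n : ℕ, ‖d t‖ ≤ ‖d (q ^ n * t)‖ := by
    intro n
    induction n with
    | zero => simp
    | succ n ih =>
      rw [pow_succ, mul_comm _ q, mul_assoc]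
      exact ih.trans (hgrow _ (horbit n))
  have hlim : Tendsto (fun n : ℕ => q ^ n * t) atTop (𝓝[Icc 0 T] 0) := by
    refine tendsto_nhdsWithin_of_tendsto_nhds_of_eventually_within _ ?_
      (Eventually.of_forall fun n => Ioc_subset_Icc_self (horbit n))
    simpa using (tendsto_pow_atTop_nhds_zero_of_lt_one hq0.le hq1).mul_const t
  have hnorm : Tendsto (fun n : ℕ => ‖d (q ^ n * t)‖) atTop (𝓝 0) := by
    simpa using (hd.comp hlim).norm
  exact norm_le_zero_iff.1 (ge_of_tendsto' hnorm hmono)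

section qHeatSol

variable {q lam β T M : ℝ} {v : ℝ → ℝ} {f : ℝ → ℂ}

lemma qHeatSol_zero (q lam : ℝ) (v : ℝ → ℝ) (c : ℂ) (f : ℝ → ℂ) : qHeatSol q lam v c f 0 = c := by
  simp [qHeatSol, jacksonIntegralC, qGamma_zero]

lemma norm_qGamma_mul_le (hq0 : 0 < q) (hq1 : q < 1) (hlam : 0 ≤ lam)
    (hv : ∀ s ∈ Icc 0 T, 0 ≤ v s ∧ v s ≤ β) (hf : ∀ s ∈ Icc 0 T, ‖f s‖ ≤ M) :
    ∀ s ∈ Icc 0 T, ‖((qGamma q lam v (q * s) : ℝ) : ℂ) * f s‖ ≤ Real.exp (lam * β * T) * M := by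
  intro s hs
  have hqs := pow_mul_mem_Icc_s7 hq0.le hq1.le hs 1
  rw [pow_one] at hqs
  have hΓ : qGamma q lam v (q * s) ≤ Real.exp (lam * β * T) :=
    (qGamma_le_exp hq0 hq1 hlam hv hqs).trans (Real.exp_le_exp.2
      (mul_le_mul_of_nonneg_left hqs.2 (mul_nonneg hlam ((hv s hs).1.trans (hv s hs).2))))
  rw [norm_mul, Complex.norm_of_nonneg (zero_le_one.trans (one_le_qGamma hq0 hq1 hlam hv hqs))]
  exact mul_le_mul hΓ (hf s hs) (norm_nonneg _) (Real.exp_pos _).le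

lemma qHeatSol_q_mul (c : ℂ) (hq0 : 0 < q) (hq1 : q < 1) (hlam : 0 ≤ lam)
    (hv : ∀ s ∈ Icc 0 T, 0 ≤ v s ∧ v s ≤ β) (hf : ∀ s ∈ Icc 0 T, ‖f s‖ ≤ M)
    {t : ℝ} (ht : t ∈ Ioc 0 T) :
    qHeatSol q lam v c f (q * t) = ((1 + (1 - q) * t * (lam * v t) : ℝ) : ℂ)
      * qHeatSol q lam v c f t - (((1 - q) * t : ℝ) : ℂ) * f t := by
  have htI := Ioc_subset_Icc_self ht
  have hJ := jacksonIntegralC_eq_add (summable_jackson_term hq0 hq1 ht.1.le fun s hs =>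
    norm_qGamma_mul_le hq0 hq1 hlam hv hf s ⟨hs.1, hs.2.trans ht.2⟩)
  have hΓ := qGamma_eq_mul_qGamma_q_mul hq0 hq1 hlam hv htI
  have hqt := pow_mul_mem_Icc_s7 hq0.le hq1.le htI 1
  rw [pow_one] at hqt
  have hΓq : qGamma q lam v (q * t) ≠ 0 :=
    (zero_lt_one.trans_le (one_le_qGamma hq0 hq1 hlam hv hqt)).ne'
  have hA : 1 + (1 - q) * t * (lam * v t) ≠ 0 := by
    have := mul_nonneg (mul_nonneg (sub_nonneg.2 hq1.le) ht.1.le) (mul_nonneg hlam (hv t htI).1)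
    linarith
  simp only [qHeatSol]
  rw [hJ, hΓ]
  generalize qGamma q lam v (q * t) = G at hΓq ⊢
  generalize 1 + (1 - q) * t * (lam * v t) = A at hA ⊢
  have hG : (G : ℂ) ≠ 0 := Complex.ofReal_ne_zero.2 hΓq
  have hA : (A : ℂ) ≠ 0 := Complex.ofReal_ne_zero.2 hA
  push_cast
  field_simp
  ring

lemma continuousWithinAt_qHeatSol_zero (c : ℂ) (hq0 : 0 < q) (hq1 : q < 1) (hlam : 0 ≤ lam)
    (hv : ∀ s ∈ Icc 0 T, 0 ≤ v s ∧ v s ≤ β) (hf : ∀ s ∈ Icc 0 T, ‖f s‖ ≤ M) :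
    ContinuousWithinAt (qHeatSol q lam v c f) (Icc 0 T) 0 := by
  set J := fun t => jacksonIntegralC q t (fun s => ((qGamma q lam v (q * s) : ℝ) : ℂ) * f s)
  have hJ : Tendsto J (𝓝[Icc 0 T] 0) (𝓝 0) := by
    have hlin : Tendsto (fun t : ℝ => t * (Real.exp (lam * β * T) * M)) (𝓝[Icc 0 T] 0) (𝓝 0) := by
      have := (tendsto_id.mul_const (Real.exp (lam * β * T) * M)).mono_left
        (nhdsWithin_le_nhds (a := (0 : ℝ)) (s := Icc 0 T))
      simpa using this
    refine squeeze_zero_norm' ?_ hlin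
    filter_upwards [self_mem_nhdsWithin] with t ht
    exact norm_jacksonIntegralC_le hq0 hq1 ht.1 fun s hs =>
      norm_qGamma_mul_le hq0 hq1 hlam hv hf s ⟨hs.1, hs.2.trans ht.2⟩
  have hγ : Tendsto (fun t => (((qGamma q lam v t)⁻¹ : ℝ) : ℂ)) (𝓝[Icc 0 T] 0) (𝓝 1) := by
    have := (tendsto_qGamma_nhdsWithin_zero hq0 hq1 hlam hv).inv₀ one_ne_zero
    simpa [Function.comp_def] using (Complex.continuous_ofReal.tendsto _).comp this
  have h := hγ.mul (hJ.const_add c)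
  rw [one_mul, add_zero] at h
  rw [ContinuousWithinAt, qHeatSol_zero]
  exact h

end qHeatSol

theorem scalar_qCauchy_solution_general
    (q T α β lam : ℝ) (v : ℝ → ℝ) (c : ℂ) (f : ℝ → ℂ)
    (hq0 : 0 < q) (hq1 : q < 1)
    (hα : 0 < α)
    (hv : ∀ t ∈ Set.Icc (0 : ℝ) T, α ≤ v t ∧ v t ≤ β)
    (hlam : 0 < lam)
    (hfb : ∃ M, ∀ t ∈ Set.Icc (0 : ℝ) T, ‖f t‖ ≤ M) :
    (∀ t ∈ Set.Ioc (0 : ℝ) T,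
      qDerivC q (qHeatSol q lam v c f) t
        + ((lam * v t : ℝ) : ℂ) * qHeatSol q lam v c f t = f t) ∧
    qHeatSol q lam v c f 0 = c ∧
    ContinuousWithinAt (qHeatSol q lam v c f) (Set.Icc 0 T) 0 ∧
    (∀ w : ℝ → ℂ,
      ContinuousWithinAt w (Set.Icc 0 T) 0 →
      (∀ t ∈ Set.Ioc (0 : ℝ) T,
        qDerivC q w t + ((lam * v t : ℝ) : ℂ) * w t = f t) →
      w 0 = c →
      ∀ t ∈ Set.Icc (0 : ℝ) T, w t = qHeatSol q lam v c f t) := by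
  obtain ⟨M, hM⟩ := hfb
  have hv' : ∀ s ∈ Icc 0 T, 0 ≤ v s ∧ v s ≤ β := fun s hs => ⟨hα.le.trans (hv s hs).1, (hv s hs).2⟩
  have hsol : ∀ t ∈ Ioc 0 T, qDerivC q (qHeatSol q lam v c f) t
      + ((lam * v t : ℝ) : ℂ) * qHeatSol q lam v c f t = f t := fun t ht =>
    (qDerivC_add_mul_eq_iff hq1.ne ht.1.ne').2 (qHeatSol_q_mul c hq0 hq1 hlam.le hv' hM ht)
  have hcont := continuousWithinAt_qHeatSol_zero c hq0 hq1 hlam.le hv' hM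
  refine ⟨hsol, qHeatSol_zero q lam v c f, hcont, fun w hwc hw hw0 t ht => ?_⟩
  rcases ht.1.eq_or_lt with rfl | htpos
  · rw [hw0, qHeatSol_zero]
  have hdiff : Tendsto (w - qHeatSol q lam v c f) (𝓝[Icc 0 T] 0) (𝓝 0) := by
    simpa [hw0, qHeatSol_zero] using (hwc.sub hcont).tendsto
  refine sub_eq_zero.1 (eq_zero_of_tendsto_of_norm_le_norm_mul hq0 hq1 hdiff (fun s hs => ?_)
    t ⟨htpos, ht.2⟩)
  exact norm_sub_le_norm_sub_of_qDerivC_add_mul_eq hq1 hs.1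
    (mul_nonneg hlam.le (hv' s (Ioc_subset_Icc_self hs)).1) (hw s hs) (hsol s hs)

/-- Solution of the scalar q-Cauchy problem: for `λ > 0`, `c ∈ ℂ` and bounded
`f : [0,T] → ℂ`, the function `u(t) = γ_{υ,λ}(t)·[c + ∫_0^t Γ_{υ,λ}(qs) f(s) d_q s]`
satisfies `D_q u(t) + λ υ(t) u(t) = f(t)` on `(0,T]`, `u(0) = c`, and it is the unique
such function which is continuous at `0`. -/
theorem scalar_qCauchy_solution
    (q T α β lam : ℝ) (v : ℝ → ℝ) (c : ℂ) (f : ℝ → ℂ)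
    (hq0 : 0 < q) (hq1 : q < 1) (hT : 0 < T)
    (hvcont : ContinuousOn v (Set.Icc 0 T))
    (hα : 0 < α)
    (hv : ∀ t ∈ Set.Icc (0 : ℝ) T, α ≤ v t ∧ v t ≤ β)
    (hlam : 0 < lam)
    (hfb : ∃ M, ∀ t ∈ Set.Icc (0 : ℝ) T, ‖f t‖ ≤ M) :
    (∀ t ∈ Set.Ioc (0 : ℝ) T,
      qDerivC q (qHeatSol q lam v c f) t
        + ((lam * v t : ℝ) : ℂ) * qHeatSol q lam v c f t = f t) ∧
    qHeatSol q lam v c f 0 = c ∧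
    ContinuousWithinAt (qHeatSol q lam v c f) (Set.Icc 0 T) 0 ∧
    (∀ w : ℝ → ℂ,
      ContinuousWithinAt w (Set.Icc 0 T) 0 →
      (∀ t ∈ Set.Ioc (0 : ℝ) T,
        qDerivC q w t + ((lam * v t : ℝ) : ℂ) * w t = f t) →
      w 0 = c →
      ∀ t ∈ Set.Icc (0 : ℝ) T, w t = qHeatSol q lam v c f t) :=
  scalar_qCauchy_solution_general q T α β lam v c f hq0 hq1 hα hv hlam hfb
end

section
/- Coefficient estimate for the direct problem (estimate (3.14) of the paper, with the spectral parameter explicit): let λ > 0, c ∈ ℂ, f:[0,T]→ℂ bounded, and let u(t) = γ_{υ,λ}(t)·[c + ∫_0^t Γ_{υ,λ}(qs) f(s) d_q s]. Then for every t ∈ [0,T], |u(t)| ≤ (1/E_q^{αλt}) |c| + ∫_0^t (E_q^{βλqs}/E_q^{αλt}) |f(s)| d_q s. -/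
open scoped BigOperators InnerProductSpace

/-!
Iterating the functional equation `E_q^x = (1 + (1 - q) x) E_q^{qx}` and letting
`E_q^{q^n x} → 1` gives Euler's product `E_q^x = ∏ (1 + (1 - q) q^i x)`, so `E_q` and `Γ_{υ,λ}` are
products of the same shape. Comparing factors, `α ≤ υ ≤ β` gives
`E_q^{αλs} ≤ Γ_{υ,λ}(s) ≤ E_q^{βλs}`. The estimate then follows from the triangle inequality,
bounding `γ_{υ,λ}(t)` by `1 / E_q^{αλt}` and, inside the Jackson integral, `Γ_{υ,λ}(qs)` by
`E_q^{βλqs}`.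
-/

open Filter Topology

noncomputable def qExpTerm (q x : ℝ) (k : ℕ) : ℝ :=
  q ^ (k * (k - 1) / 2) * x ^ k / qFact q k

section QExponential

variable {q x : ℝ}

lemma one_le_qFact (hq0 : 0 ≤ q) (hq1 : q < 1) (k : ℕ) : 1 ≤ qFact q k := by
  induction k with
  | zero => simp [qFact]
  | succ k ih =>
    have hfactor : 1 ≤ (1 - q ^ (k + 1)) / (1 - q) := by
      rw [one_le_div (sub_pos.2 hq1)]
      linarith [pow_le_of_le_one hq0 hq1.le (by omega : k + 1 ≠ 0)]
    rw [qFact, Finset.prod_range_succ, ← qFact]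
    nlinarith

lemma qFact_pos (hq0 : 0 ≤ q) (hq1 : q < 1) (k : ℕ) : 0 < qFact q k :=
  one_pos.trans_le (one_le_qFact hq0 hq1 k)

lemma qExp_eq_tsum_qExpTerm (q x : ℝ) : qExp q x = ∑' k, qExpTerm q x k := rfl

lemma qExpTerm_zero (q x : ℝ) : qExpTerm q x 0 = 1 := by simp [qExpTerm, qFact]

lemma qExpTerm_nonneg (hq0 : 0 ≤ q) (hq1 : q < 1) (hx : 0 ≤ x) (k : ℕ) :
    0 ≤ qExpTerm q x k :=
  div_nonneg (by positivity) (qFact_pos hq0 hq1 k).le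

lemma qExpTerm_mul (q y x : ℝ) (k : ℕ) : qExpTerm q (y * x) k = y ^ k * qExpTerm q x k := by
  simp only [qExpTerm, mul_pow]
  ring

lemma qExpTerm_succ (hq0 : 0 ≤ q) (hq1 : q < 1) (x : ℝ) (k : ℕ) :
    qExpTerm q x (k + 1) = q ^ k * x * ((1 - q) / (1 - q ^ (k + 1))) * qExpTerm q x k := by
  have htri : (k + 1) * (k + 1 - 1) / 2 = k * (k - 1) / 2 + k := by
    rw [← Finset.sum_range_id, ← Finset.sum_range_id, Finset.sum_range_succ]
  have hF := (qFact_pos hq0 hq1 k).ne'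
  have hq : 1 - q ≠ 0 := (sub_pos.2 hq1).ne'
  have hqk : 1 - q ^ (k + 1) ≠ 0 := (sub_pos.2 (pow_lt_one₀ hq0 hq1 k.succ_ne_zero)).ne'
  rw [qExpTerm, qExpTerm, htri, qFact, Finset.prod_range_succ, ← qFact, pow_add, pow_succ]
  field_simp

lemma summable_qExpTerm (hq0 : 0 ≤ q) (hq1 : q < 1) (hx : 0 ≤ x) :
    Summable (qExpTerm q x) := by
  have hsmall : Tendsto (fun k : ℕ => q ^ k * x) atTop (𝓝 0) := by
    simpa using (tendsto_pow_atTop_nhds_zero_of_lt_one hq0 hq1).mul_const x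
  refine summable_of_ratio_norm_eventually_le (r := 1 / 2) (by norm_num) ?_
  filter_upwards [hsmall.eventually (gt_mem_nhds (by norm_num : (0 : ℝ) < 1 / 2))] with k hk
  have hratio : (1 - q) / (1 - q ^ (k + 1)) ≤ 1 :=
    div_le_one_of_le₀ (by linarith [pow_le_of_le_one hq0 hq1.le (by omega : k + 1 ≠ 0)])
      (sub_nonneg.2 (pow_le_one₀ hq0 hq1.le))
  rw [Real.norm_of_nonneg (qExpTerm_nonneg hq0 hq1 hx _),
    Real.norm_of_nonneg (qExpTerm_nonneg hq0 hq1 hx _), qExpTerm_succ hq0 hq1]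
  refine mul_le_mul_of_nonneg_right ?_ (qExpTerm_nonneg hq0 hq1 hx k)
  calc q ^ k * x * ((1 - q) / (1 - q ^ (k + 1))) ≤ q ^ k * x :=
        mul_le_of_le_one_right (by positivity) hratio
    _ ≤ 1 / 2 := hk.le

lemma qExp_eq_one_add_tsum (hq0 : 0 ≤ q) (hq1 : q < 1) (hx : 0 ≤ x) :
    qExp q x = 1 + ∑' k, qExpTerm q x (k + 1) := by
  rw [qExp_eq_tsum_qExpTerm, (summable_qExpTerm hq0 hq1 hx).tsum_eq_zero_add, qExpTerm_zero]

lemma one_le_qExp (hq0 : 0 ≤ q) (hq1 : q < 1) (hx : 0 ≤ x) : 1 ≤ qExp q x := by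
  rw [qExp_eq_one_add_tsum hq0 hq1 hx]
  exact le_add_of_nonneg_right (tsum_nonneg fun k => qExpTerm_nonneg hq0 hq1 hx _)

/-- Every term but the constant one scales at least linearly in `y ∈ [0, 1]`. -/
lemma qExp_mul_le {y : ℝ} (hq0 : 0 ≤ q) (hq1 : q < 1) (hy0 : 0 ≤ y) (hy1 : y ≤ 1)
    (hx : 0 ≤ x) : qExp q (y * x) ≤ 1 + y * (qExp q x - 1) := by
  have hS := (summable_nat_add_iff 1).2 (summable_qExpTerm hq0 hq1 hx)
  have hyS := (summable_nat_add_iff 1).2 (summable_qExpTerm hq0 hq1 (mul_nonneg hy0 hx))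
  rw [qExp_eq_one_add_tsum hq0 hq1 (mul_nonneg hy0 hx), qExp_eq_one_add_tsum hq0 hq1 hx,
    add_sub_cancel_left, ← tsum_mul_left]
  refine add_le_add_right (hyS.tsum_le_tsum (fun k => ?_) (hS.mul_left y)) 1
  rw [qExpTerm_mul]
  exact mul_le_mul_of_nonneg_right (pow_le_of_le_one hy0 hy1 k.succ_ne_zero)
    (qExpTerm_nonneg hq0 hq1 hx _)

lemma qExp_mul_le_qExp {y : ℝ} (hq0 : 0 ≤ q) (hq1 : q < 1) (hy0 : 0 ≤ y) (hy1 : y ≤ 1)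
    (hx : 0 ≤ x) : qExp q (y * x) ≤ qExp q x := by
  have := qExp_mul_le hq0 hq1 hy0 hy1 hx
  nlinarith [one_le_qExp hq0 hq1 hx]

lemma tendsto_qExp_pow_mul (hq0 : 0 ≤ q) (hq1 : q < 1) (hx : 0 ≤ x) :
    Tendsto (fun n : ℕ => qExp q (q ^ n * x)) atTop (𝓝 1) := by
  have hupper : Tendsto (fun n : ℕ => 1 + q ^ n * (qExp q x - 1)) atTop (𝓝 1) := by
    simpa using ((tendsto_pow_atTop_nhds_zero_of_lt_one hq0 hq1).mul_const _).const_add 1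
  refine tendsto_of_tendsto_of_tendsto_of_le_of_le tendsto_const_nhds hupper
    (fun n => one_le_qExp hq0 hq1 (by positivity)) fun n => ?_
  exact qExp_mul_le hq0 hq1 (pow_nonneg hq0 n) (pow_le_one₀ hq0 hq1.le) hx

lemma qExp_eq_one_add_mul_qExp (hq0 : 0 ≤ q) (hq1 : q < 1) (hx : 0 ≤ x) :
    qExp q x = (1 + (1 - q) * x) * qExp q (q * x) := by
  have hqx : 0 ≤ q * x := mul_nonneg hq0 hx
  have hS := summable_qExpTerm hq0 hq1 hqx
  have hterm (k : ℕ) : qExpTerm q x (k + 1)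
      = qExpTerm q (q * x) (k + 1) + (1 - q) * x * qExpTerm q (q * x) k := by
    have hqk : 1 - q ^ (k + 1) ≠ 0 := (sub_pos.2 (pow_lt_one₀ hq0 hq1 k.succ_ne_zero)).ne'
    rw [qExpTerm_mul, qExpTerm_mul, qExpTerm_succ hq0 hq1]
    field_simp
    ring
  rw [qExp_eq_one_add_tsum hq0 hq1 hx, tsum_congr hterm,
    ((summable_nat_add_iff 1).2 hS).tsum_add (hS.mul_left _), tsum_mul_left,
    ← qExp_eq_tsum_qExpTerm, ← add_assoc, ← qExp_eq_one_add_tsum hq0 hq1 hqx]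
  ring

lemma qExp_eq_prod_mul_qExp (hq0 : 0 ≤ q) (hq1 : q < 1) (hx : 0 ≤ x) (n : ℕ) :
    qExp q x = (∏ i ∈ Finset.range n, (1 + (1 - q) * q ^ i * x)) * qExp q (q ^ n * x) := by
  induction n with
  | zero => simp
  | succ n ih =>
    rw [ih, qExp_eq_one_add_mul_qExp hq0 hq1 (mul_nonneg (pow_nonneg hq0 n) hx),
      Finset.prod_range_succ, ← mul_assoc q, ← pow_succ']
    ring

lemma summable_one_sub_mul_pow_mul (hq0 : 0 ≤ q) (hq1 : q < 1) (x : ℝ) :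
    Summable fun i : ℕ => (1 - q) * q ^ i * x :=
  ((summable_geometric_of_lt_one hq0 hq1).mul_left ((1 - q) * x)).congr fun i => by ring

theorem qExp_eq_tprod (hq0 : 0 ≤ q) (hq1 : q < 1) (hx : 0 ≤ x) :
    qExp q x = ∏' i : ℕ, (1 + (1 - q) * q ^ i * x) := by
  have hprod := (Real.multipliable_one_add_of_summable
    (summable_one_sub_mul_pow_mul hq0 hq1 x)).hasProd.tendsto_prod_nat
  have h := hprod.mul (tendsto_qExp_pow_mul hq0 hq1 hx)
  simp_rw [mul_one, ← qExp_eq_prod_mul_qExp hq0 hq1 hx] at h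
  exact tendsto_const_nhds_iff.1 h

end QExponential

lemma tprod_one_add_le_tprod_one_add {c d : ℕ → ℝ} (hc : ∀ i, 0 ≤ c i) (hcd : ∀ i, c i ≤ d i)
    (hd : Summable d) : ∏' i, (1 + c i) ≤ ∏' i, (1 + d i) :=
  le_of_tendsto_of_tendsto'
    (Real.multipliable_one_add_of_summable (hd.of_nonneg_of_le hc hcd)).hasProd.tendsto_prod_nat
    (Real.multipliable_one_add_of_summable hd).hasProd.tendsto_prod_nat fun _ =>
      Finset.prod_le_prod (fun i _ => by linarith [hc i]) fun i _ => by linarith [hcd i]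

lemma qGamma_mem_Icc {q lam α β s : ℝ} {v : ℝ → ℝ} (hq0 : 0 ≤ q) (hq1 : q < 1) (hlam : 0 ≤ lam)
    (hα : 0 ≤ α) (hs : 0 ≤ s) (hv : ∀ i : ℕ, α ≤ v (q ^ i * s) ∧ v (q ^ i * s) ≤ β) :
    qGamma q lam v s ∈ Set.Icc (qExp q (α * lam * s)) (qExp q (β * lam * s)) := by
  have hβ : 0 ≤ β := hα.trans ((hv 0).1.trans (hv 0).2)
  have hscale (i : ℕ) : 0 ≤ (1 - q) * lam * q ^ i * s :=
    mul_nonneg (mul_nonneg (mul_nonneg (sub_nonneg.2 hq1.le) hlam) (pow_nonneg hq0 i)) hs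
  have hfactor (i : ℕ) (γ : ℝ) :
      (1 - q) * q ^ i * (γ * lam * s) = (1 - q) * lam * q ^ i * s * γ := by ring
  rw [qExp_eq_tprod hq0 hq1 (by positivity), qExp_eq_tprod hq0 hq1 (by positivity)]
  constructor
  · refine tprod_one_add_le_tprod_one_add (fun i => ?_) (fun i => ?_) ?_
    · rw [hfactor]
      exact mul_nonneg (hscale i) hα
    · rw [hfactor]
      exact mul_le_mul_of_nonneg_left (hv i).1 (hscale i)
    · refine (summable_one_sub_mul_pow_mul hq0 hq1 (β * lam * s)).of_nonneg_of_le
        (fun i => mul_nonneg (hscale i) (hα.trans (hv i).1)) fun i => ?_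
      rw [hfactor]
      exact mul_le_mul_of_nonneg_left (hv i).2 (hscale i)
  · refine tprod_one_add_le_tprod_one_add (fun i => mul_nonneg (hscale i) (hα.trans (hv i).1))
      (fun i => ?_) (summable_one_sub_mul_pow_mul hq0 hq1 (β * lam * s))
    rw [hfactor]
    exact mul_le_mul_of_nonneg_left (hv i).2 (hscale i)

lemma mul_mem_Icc_zero {y s T : ℝ} (hy0 : 0 ≤ y) (hy1 : y ≤ 1) (hs : s ∈ Set.Icc 0 T) :
    y * s ∈ Set.Icc 0 T :=
  ⟨mul_nonneg hy0 hs.1, (mul_le_of_le_one_left hs.1 hy1).trans hs.2⟩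

section JacksonIntegral

variable {q x : ℝ}

lemma jacksonIntegral_const_mul (q x a : ℝ) (h : ℝ → ℝ) :
    jacksonIntegral q x (fun s => a * h s) = a * jacksonIntegral q x h := by
  simp only [jacksonIntegral, mul_left_comm _ a, tsum_mul_left]

lemma norm_jacksonIntegralC_le_s9 {g : ℝ → ℂ} {h : ℝ → ℝ} (hq0 : 0 ≤ q) (hq1 : q ≤ 1)
    (hx : 0 ≤ x) (hgh : ∀ m : ℕ, ‖g (q ^ m * x)‖ ≤ h (q ^ m * x))
    (hs : Summable fun m : ℕ => q ^ m * h (q ^ m * x)) :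
    ‖jacksonIntegralC q x g‖ ≤ jacksonIntegral q x h := by
  have hterm (m : ℕ) : ‖(q : ℂ) ^ m * g (q ^ m * x)‖ ≤ q ^ m * h (q ^ m * x) := by
    rw [norm_mul, norm_pow, Complex.norm_real, Real.norm_of_nonneg hq0]
    exact mul_le_mul_of_nonneg_left (hgh m) (pow_nonneg hq0 m)
  have hlen : 0 ≤ (1 - q) * x := mul_nonneg (sub_nonneg.2 hq1) hx
  rw [jacksonIntegralC, jacksonIntegral, norm_mul, Complex.norm_real, Real.norm_of_nonneg hlen]
  exact mul_le_mul_of_nonneg_left (tsum_of_norm_bounded hs.hasSum hterm) hlen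

end JacksonIntegral

lemma norm_jacksonIntegralC_qGamma_mul_le {q T α β lam M t : ℝ} {v : ℝ → ℝ} {f : ℝ → ℂ}
    (hq0 : 0 ≤ q) (hq1 : q < 1) (hα : 0 ≤ α) (hlam : 0 ≤ lam)
    (hv : ∀ s ∈ Set.Icc 0 T, α ≤ v s ∧ v s ≤ β) (hM : ∀ s ∈ Set.Icc 0 T, ‖f s‖ ≤ M)
    (ht : t ∈ Set.Icc 0 T) :
    ‖jacksonIntegralC q t (fun s => ((qGamma q lam v (q * s) : ℝ) : ℂ) * f s)‖
      ≤ jacksonIntegral q t (fun s => qExp q (β * lam * (q * s)) * ‖f s‖) := by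
  have hβ : 0 ≤ β := hα.trans ((hv t ht).1.trans (hv t ht).2)
  have ht0 : 0 ≤ t := ht.1
  have horbit (m : ℕ) : q ^ m * t ∈ Set.Icc 0 T :=
    mul_mem_Icc_zero (pow_nonneg hq0 m) (pow_le_one₀ hq0 hq1.le) ht
  have hΓ (m : ℕ) := qGamma_mem_Icc hq0 hq1 hlam hα (mul_nonneg hq0 (horbit m).1) fun i =>
    hv _ (mul_mem_Icc_zero (pow_nonneg hq0 i) (pow_le_one₀ hq0 hq1.le)
      (mul_mem_Icc_zero hq0 hq1.le (horbit m)))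
  refine norm_jacksonIntegralC_le_s9 hq0 hq1.le ht.1 (fun m => ?_) ?_
  · have hΓ0 : 0 ≤ qGamma q lam v (q * (q ^ m * t)) :=
      zero_le_one.trans ((one_le_qExp hq0 hq1 (by positivity)).trans (hΓ m).1)
    rw [norm_mul, Complex.norm_real, Real.norm_of_nonneg hΓ0]
    exact mul_le_mul_of_nonneg_right (hΓ m).2 (norm_nonneg _)
  · refine ((summable_geometric_of_lt_one hq0 hq1).mul_right
      (qExp q (β * lam * (q * t)) * M)).of_nonneg_of_le
      (fun m => mul_nonneg (pow_nonneg hq0 m)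
        (mul_nonneg (zero_le_one.trans (one_le_qExp hq0 hq1 (by positivity))) (norm_nonneg _)))
      fun m => mul_le_mul_of_nonneg_left ?_ (pow_nonneg hq0 m)
    have hmono : qExp q (β * lam * (q * (q ^ m * t))) ≤ qExp q (β * lam * (q * t)) := by
      rw [show β * lam * (q * (q ^ m * t)) = q ^ m * (β * lam * (q * t)) by ring]
      exact qExp_mul_le_qExp hq0 hq1 (pow_nonneg hq0 m) (pow_le_one₀ hq0 hq1.le)
        (by positivity)
    exact mul_le_mul hmono (hM _ (horbit m)) (norm_nonneg _)
      (zero_le_one.trans (one_le_qExp hq0 hq1 (by positivity)))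

theorem coefficient_estimate_direct_general
    (q T α β lam : ℝ) (v : ℝ → ℝ) (c : ℂ) (f : ℝ → ℂ)
    (hq0 : 0 < q) (hq1 : q < 1)
    (hα : 0 < α)
    (hv : ∀ t ∈ Set.Icc (0 : ℝ) T, α ≤ v t ∧ v t ≤ β)
    (hlam : 0 < lam)
    (hfb : ∃ M, ∀ t ∈ Set.Icc (0 : ℝ) T, ‖f t‖ ≤ M) :
    ∀ t ∈ Set.Icc (0 : ℝ) T,
      ‖qHeatSol q lam v c f t‖
        ≤ (1 / qExp q (α * lam * t)) * ‖c‖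
          + jacksonIntegral q t
              (fun s => qExp q (β * lam * (q * s)) / qExp q (α * lam * t) * ‖f s‖) := by
  intro t ht
  obtain ⟨M, hM⟩ := hfb
  have hE : 0 < qExp q (α * lam * t) :=
    one_pos.trans_le (one_le_qExp hq0.le hq1 (by have := ht.1; positivity))
  have hEΓ : qExp q (α * lam * t) ≤ qGamma q lam v t :=
    (qGamma_mem_Icc hq0.le hq1 hlam.le hα.le ht.1 fun i =>
      hv _ (mul_mem_Icc_zero (pow_nonneg hq0.le i) (pow_le_one₀ hq0.le hq1.le) ht)).1
  have hJ := norm_jacksonIntegralC_qGamma_mul_le hq0.le hq1 hα.le hlam.le hv hM ht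
  calc ‖qHeatSol q lam v c f t‖
      = (qGamma q lam v t)⁻¹ * ‖c + jacksonIntegralC q t
          (fun s => ((qGamma q lam v (q * s) : ℝ) : ℂ) * f s)‖ := by
        rw [qHeatSol, norm_mul, Complex.norm_real,
          Real.norm_of_nonneg (inv_nonneg.2 (hE.le.trans hEΓ))]
    _ ≤ (qExp q (α * lam * t))⁻¹ * (‖c‖ + jacksonIntegral q t
          (fun s => qExp q (β * lam * (q * s)) * ‖f s‖)) :=
        mul_le_mul (inv_anti₀ hE hEΓ) ((norm_add_le _ _).trans (add_le_add_right hJ _))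
          (norm_nonneg _) (inv_nonneg.2 hE.le)
    _ = _ := by
        rw [mul_add, ← jacksonIntegral_const_mul, one_div]
        simp only [div_eq_inv_mul, mul_assoc]

/-- Coefficient estimate for the direct problem (estimate (3.14) of the paper): for
`u(t) = γ_{υ,λ}(t)·[c + ∫_0^t Γ_{υ,λ}(qs) f(s) d_q s]` one has, for every `t ∈ [0,T]`,
`|u(t)| ≤ (1/E_q^{αλt}) |c| + ∫_0^t (E_q^{βλqs}/E_q^{αλt}) |f(s)| d_q s`. -/
theorem coefficient_estimate_direct
    (q T α β lam : ℝ) (v : ℝ → ℝ) (c : ℂ) (f : ℝ → ℂ)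
    (hq0 : 0 < q) (hq1 : q < 1)
    (hvcont : ContinuousOn v (Set.Icc 0 T))
    (hα : 0 < α)
    (hv : ∀ t ∈ Set.Icc (0 : ℝ) T, α ≤ v t ∧ v t ≤ β)
    (hlam : 0 < lam)
    (hfb : ∃ M, ∀ t ∈ Set.Icc (0 : ℝ) T, ‖f t‖ ≤ M) :
    ∀ t ∈ Set.Icc (0 : ℝ) T,
      ‖qHeatSol q lam v c f t‖
        ≤ (1 / qExp q (α * lam * t)) * ‖c‖
          + jacksonIntegral q t
              (fun s => qExp q (β * lam * (q * s)) / qExp q (α * lam * t) * ‖f s‖) :=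
  coefficient_estimate_direct_general q T α β lam v c f hq0 hq1 hα hv hlam hfb
end

section
/- Symmetry of the q-Bessel operator: let α > −1 and let f, g belong to C²_{q,0}(ℝ_q^+), i.e. f, g: ℝ_q^+ → ℝ with sup_{x∈ℝ_q^+}|D_q^k f(x)| < ∞ (k = 0,1,2) and with x^{2α+1}D_q f(x) g(x) → 0 and D_q f(x)·x^{2α+1}D_q g(x) → 0 as x → 0 and as x → ∞ along ℝ_q^+ (and likewise with f, g interchanged). Then ⟨Δ_{q,α} f, g⟩ = ⟨f, Δ_{q,α} g⟩, where ⟨f,g⟩ = ∫_0^∞ f(x) g(x) x^{2α+1} d_q x. -/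
open scoped BigOperators InnerProductSpace

/-- The q-lattice `ℝ_q^+ = {q^z : z ∈ ℤ}`. -/
def qLattice (q : ℝ) : Set ℝ := {x : ℝ | ∃ z : ℤ, x = q ^ z}

/-- The inner product `⟨f,g⟩ = ∫_0^∞ f(x) g(x) x^{2α+1} d_q x` on `L_{α,2,q}`, with the
bilateral Jackson integral `∫_0^∞ h(x) d_q x = (1−q) Σ_{z∈ℤ} q^z h(q^z)`. -/
noncomputable def qBesselInner (q a : ℝ) (f g : ℝ → ℝ) : ℝ :=
  (1 - q) * ∑' z : ℤ, (q : ℝ) ^ z * (f (q ^ z) * g (q ^ z) * ((q : ℝ) ^ z) ^ (2 * a + 1))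

/-- The q-Bessel operator `Δ_{q,α} f(x) = x^{−(2α+1)} D_q[t ↦ t^{2α+1} D_q f(t)](q^{−1}x)`. -/
noncomputable def qBesselOp (q a : ℝ) (f : ℝ → ℝ) (x : ℝ) : ℝ :=
  x ^ (-(2 * a + 1)) * qDeriv q (fun t => t ^ (2 * a + 1) * qDeriv q f t) (q⁻¹ * x)

/-!
The q-Lagrange identity: with the q-Wronskian `W = x^{2α+1} (D_q f · g - f · D_q g)`, the summand
`x (Δ_{q,α} f · g - f · Δ_{q,α} g) x^{2α+1}` at `x = q^z` equals
`q / (1 - q) · (W(q^{z-1}) - W(q^z))`.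
Hence the difference of the two Jackson sums telescopes to the values of `W` at `0` and `∞`,
which vanish by the boundary conditions.
-/

open Filter Topology SummationFilter

theorem tsum_int_sub_one_sub_eq_of_tendsto {G : Type*} [AddCommGroup G] [TopologicalSpace G]
    [IsTopologicalAddGroup G] [T2Space G] {V : ℤ → G} {a b : G}
    (hbot : Tendsto V atBot (𝓝 a)) (htop : Tendsto V atTop (𝓝 b))
    (hV : Summable fun n ↦ V (n - 1) - V n) :
    ∑' n, (V (n - 1) - V n) = a - b := by
  rw [← tsum_eq_of_summable_unconditional (L := symmetricIco ℤ) hV]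
  apply HasSum.tsum_eq
  rw [hasSum_symmetricIco_int_iff]
  have hN : Tendsto (fun N : ℕ ↦ (N : ℤ) - 1) atTop atTop :=
    tendsto_atTop_add_const_right _ (-1) tendsto_natCast_atTop_atTop
  have hnegN : Tendsto (fun N : ℕ ↦ -(N : ℤ) - 1) atTop atBot :=
    tendsto_atBot_add_const_right _ (-1)
      (tendsto_neg_atTop_atBot.comp tendsto_natCast_atTop_atTop)
  have hsum (N : ℕ) :
      ∑ n ∈ Finset.Ico (-(N : ℤ)) N, (V (n - 1) - V n) = V (-N - 1) - V (N - 1) := by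
    simpa using Finset.sum_Ico_int_sub N (fun n ↦ V (n - 1))
  simpa only [hsum, Function.comp_apply] using (hbot.comp hnegN).sub (htop.comp hN)

noncomputable def qBesselWronskian (q a : ℝ) (f g : ℝ → ℝ) (x : ℝ) : ℝ :=
  x ^ (2 * a + 1) * (qDeriv q f x * g x - f x * qDeriv q g x)

theorem qBesselOp_lagrange_identity (q a : ℝ) (f g : ℝ → ℝ) {x : ℝ} (hx : 0 < x) :
    x * (qBesselOp q a f x * g x * x ^ (2 * a + 1))
        - x * (f x * qBesselOp q a g x * x ^ (2 * a + 1))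
      = q / (1 - q) * (qBesselWronskian q a f g (q⁻¹ * x) - qBesselWronskian q a f g x) := by
  by_cases hq : q = 0
  · simp [hq, qBesselOp, qDeriv]
  by_cases hq1 : q = 1
  · simp [hq1, qBesselOp, qDeriv]
  have hxq : q * (q⁻¹ * x) = x := by field_simp
  have hpow : x ^ (2 * a + 1) ≠ 0 := (Real.rpow_pos_of_pos hx _).ne'
  have h1q : 1 - q ≠ 0 := sub_ne_zero.mpr (Ne.symm hq1)
  simp only [qBesselOp, qDeriv, qBesselWronskian, hxq, Real.rpow_neg hx.le]
  field_simp
  ring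

theorem qBessel_symmetric_general
    (q a : ℝ) (f g : ℝ → ℝ)
    (hq0 : 0 < q) (hq1 : q < 1)
    -- boundary terms x^{2α+1} D_q f(x) g(x) vanish as x → 0 (z → ∞) and x → ∞ (z → −∞)
    (hbfg0 : Filter.Tendsto (fun z : ℤ => ((q : ℝ) ^ z) ^ (2 * a + 1) * qDeriv q f (q ^ z) * g (q ^ z))
      Filter.atTop (nhds 0))
    (hbfginf : Filter.Tendsto (fun z : ℤ => ((q : ℝ) ^ z) ^ (2 * a + 1) * qDeriv q f (q ^ z) * g (q ^ z))
      Filter.atBot (nhds 0))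
    (hbgf0 : Filter.Tendsto (fun z : ℤ => ((q : ℝ) ^ z) ^ (2 * a + 1) * qDeriv q g (q ^ z) * f (q ^ z))
      Filter.atTop (nhds 0))
    (hbgfinf : Filter.Tendsto (fun z : ℤ => ((q : ℝ) ^ z) ^ (2 * a + 1) * qDeriv q g (q ^ z) * f (q ^ z))
      Filter.atBot (nhds 0))
    -- absolute convergence of the q-integrals involved
    (hs1 : Summable (fun z : ℤ =>
      |(q : ℝ) ^ z * (qBesselOp q a f (q ^ z) * g (q ^ z) * ((q : ℝ) ^ z) ^ (2 * a + 1))|))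
    (hs2 : Summable (fun z : ℤ =>
      |(q : ℝ) ^ z * (f (q ^ z) * qBesselOp q a g (q ^ z) * ((q : ℝ) ^ z) ^ (2 * a + 1))|)) :
    qBesselInner q a (qBesselOp q a f) g = qBesselInner q a f (qBesselOp q a g) := by
  set V : ℤ → ℝ := fun z ↦ qBesselWronskian q a f g (q ^ z)
  have hlag (z : ℤ) :
      q ^ z * (qBesselOp q a f (q ^ z) * g (q ^ z) * ((q : ℝ) ^ z) ^ (2 * a + 1))
        - q ^ z * (f (q ^ z) * qBesselOp q a g (q ^ z) * ((q : ℝ) ^ z) ^ (2 * a + 1))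
        = q / (1 - q) * (V (z - 1) - V z) := by
    rw [qBesselOp_lagrange_identity q a f g (zpow_pos hq0 z), ← zpow_neg_one,
      ← zpow_add₀ hq0.ne', neg_add_eq_sub]
  have hc : q / (1 - q) ≠ 0 := div_ne_zero hq0.ne' (sub_ne_zero.mpr hq1.ne')
  have hV : Summable fun z ↦ V (z - 1) - V z :=
    (summable_mul_left_iff hc).mp
      (((summable_abs_iff.mp hs1).sub (summable_abs_iff.mp hs2)).congr hlag)
  have hVbot : Tendsto V atBot (𝓝 0) := by
    simpa [V, qBesselWronskian, mul_sub, mul_assoc, mul_comm (f _)] using hbfginf.sub hbgfinf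
  have hVtop : Tendsto V atTop (𝓝 0) := by
    simpa [V, qBesselWronskian, mul_sub, mul_assoc, mul_comm (f _)] using hbfg0.sub hbgf0
  have htsum := (summable_abs_iff.mp hs1).tsum_sub (summable_abs_iff.mp hs2)
  rw [tsum_congr hlag, tsum_mul_left, tsum_int_sub_one_sub_eq_of_tendsto hVbot hVtop hV, sub_self,
    mul_zero, eq_comm, sub_eq_zero] at htsum
  simp only [qBesselInner, htsum]

/-- Symmetry of the q-Bessel operator: for `α > −1` and `f, g ∈ C²_{q,0}(ℝ_q^+)` (with
bounded q-derivatives up to order two and vanishing boundary terms at `0` and `∞` along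
`ℝ_q^+`), one has `⟨Δ_{q,α} f, g⟩ = ⟨f, Δ_{q,α} g⟩`. -/
theorem qBessel_symmetric
    (q a : ℝ) (f g : ℝ → ℝ)
    (hq0 : 0 < q) (hq1 : q < 1) (ha : -1 < a)
    -- boundedness of f, g and their q-derivatives up to order 2 on ℝ_q^+
    (hfb : ∃ M, ∀ x ∈ qLattice q, |f x| ≤ M ∧ |qDeriv q f x| ≤ M ∧ |qDeriv q (qDeriv q f) x| ≤ M)
    (hgb : ∃ M, ∀ x ∈ qLattice q, |g x| ≤ M ∧ |qDeriv q g x| ≤ M ∧ |qDeriv q (qDeriv q g) x| ≤ M)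
    -- boundary terms x^{2α+1} D_q f(x) g(x) vanish as x → 0 (z → ∞) and x → ∞ (z → −∞)
    (hbfg0 : Filter.Tendsto (fun z : ℤ => ((q : ℝ) ^ z) ^ (2 * a + 1) * qDeriv q f (q ^ z) * g (q ^ z))
      Filter.atTop (nhds 0))
    (hbfginf : Filter.Tendsto (fun z : ℤ => ((q : ℝ) ^ z) ^ (2 * a + 1) * qDeriv q f (q ^ z) * g (q ^ z))
      Filter.atBot (nhds 0))
    (hbgf0 : Filter.Tendsto (fun z : ℤ => ((q : ℝ) ^ z) ^ (2 * a + 1) * qDeriv q g (q ^ z) * f (q ^ z))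
      Filter.atTop (nhds 0))
    (hbgfinf : Filter.Tendsto (fun z : ℤ => ((q : ℝ) ^ z) ^ (2 * a + 1) * qDeriv q g (q ^ z) * f (q ^ z))
      Filter.atBot (nhds 0))
    -- boundary terms D_q f(x) · x^{2α+1} D_q g(x) vanish as x → 0 and x → ∞
    (hbdd0 : Filter.Tendsto (fun z : ℤ => qDeriv q f (q ^ z) * (((q : ℝ) ^ z) ^ (2 * a + 1) * qDeriv q g (q ^ z)))
      Filter.atTop (nhds 0))
    (hbddinf : Filter.Tendsto (fun z : ℤ => qDeriv q f (q ^ z) * (((q : ℝ) ^ z) ^ (2 * a + 1) * qDeriv q g (q ^ z)))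
      Filter.atBot (nhds 0))
    -- absolute convergence of the q-integrals involved
    (hs1 : Summable (fun z : ℤ =>
      |(q : ℝ) ^ z * (qBesselOp q a f (q ^ z) * g (q ^ z) * ((q : ℝ) ^ z) ^ (2 * a + 1))|))
    (hs2 : Summable (fun z : ℤ =>
      |(q : ℝ) ^ z * (f (q ^ z) * qBesselOp q a g (q ^ z) * ((q : ℝ) ^ z) ^ (2 * a + 1))|))
    (hs3 : Summable (fun z : ℤ =>
      |(q : ℝ) ^ z * (qDeriv q f (q ^ z) * qDeriv q g (q ^ z) * ((q : ℝ) ^ z) ^ (2 * a + 1))|)) :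
    qBesselInner q a (qBesselOp q a f) g = qBesselInner q a f (qBesselOp q a g) :=
  qBessel_symmetric_general q a f g hq0 hq1 hbfg0 hbfginf hbgf0 hbgfinf hs1 hs2
end
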